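/- Let 0 < Y < 2, a ≥ 0 and μ > 0. Then Γ(Y/2) · ∫₀^∞ (1 − e^{−μx}) e^{−ax} x^{−1−Y/2} dx = ∫₀^∞ log(1 + μ/(a + z)) z^{Y/2−1} dz. -/

import Mathlib

/-!
Put `s = Y / 2`. Substituting `Γ(s) x^(-s) = ∫₀^∞ e^(-xz) z^(s-1) dz` turns the left-hand side into
a double integral of a nonnegative function. Integrating first in `x` instead gives, for each `z`,
the Frullani integral `∫₀^∞ (e^(-(a+z)x) - e^(-(a+z+μ)x)) / x dx = log (1 + μ / (a + z))`.
Fubini applies because `1 - e^(-μx) ≤ min (μx) 1`, so the Lévy integrand is `O(x^(-s))` at `0`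
(integrable as `s < 1`) and `O(x^(-1-s))` at `∞` (integrable as `s > 0`).
-/

open MeasureTheory Real Set Filter Function Topology

theorem integral_integral_swap_of_nonneg {α β : Type*} [MeasurableSpace α] [MeasurableSpace β]
    {μ : Measure α} {ν : Measure β} [SFinite μ] [SFinite ν] {f : α → β → ℝ}
    (hf : AEStronglyMeasurable (uncurry f) (μ.prod ν)) (hf_nonneg : ∀ᵐ x ∂μ, 0 ≤ᵐ[ν] f x)
    (hf_sec : ∀ᵐ x ∂μ, Integrable (f x) ν) (hf_int : Integrable (fun x ↦ ∫ y, f x y ∂ν) μ) :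
    ∫ x, ∫ y, f x y ∂ν ∂μ = ∫ y, ∫ x, f x y ∂μ ∂ν := by
  refine integral_integral_swap ((integrable_prod_iff hf).2 ⟨hf_sec, hf_int.congr ?_⟩)
  filter_upwards [hf_nonneg] with x hx
  exact integral_congr_ae (hx.mono fun y hy ↦ (norm_of_nonneg hy).symm)

namespace Real

theorem one_sub_exp_neg_mul_le {m x : ℝ} : 1 - exp (-m * x) ≤ m * x := by
  rw [neg_mul]; linarith [one_sub_le_exp_neg (m * x)]

theorem one_sub_exp_neg_mul_nonneg {m x : ℝ} (hm : 0 ≤ m) (hx : 0 ≤ x) :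
    0 ≤ 1 - exp (-m * x) := by
  rw [sub_nonneg, exp_le_one_iff, neg_mul, neg_nonpos]
  positivity

theorem rpow_neg_one_sub {x : ℝ} (hx : x ≠ 0) (s : ℝ) : x ^ (-1 - s) = x ^ (-s) / x := by
  rw [show -1 - s = -s - 1 by ring, rpow_sub_one hx]

theorem integrableOn_exp_neg_mul_mul_rpow {x s : ℝ} (hx : 0 < x) (hs : 0 < s) :
    IntegrableOn (fun z ↦ exp (-x * z) * z ^ (s - 1)) (Ioi 0) := by
  simpa [mul_comm] using
    integrableOn_rpow_mul_exp_neg_mul_rpow (p := 1) (by linarith : -1 < s - 1) one_pos hx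

theorem integral_exp_neg_mul_mul_rpow {x s : ℝ} (hx : 0 < x) (hs : 0 < s) :
    ∫ z in Ioi 0, exp (-x * z) * z ^ (s - 1) = Gamma s * x ^ (-s) := by
  simp_rw [mul_comm (exp _), neg_mul]
  rw [integral_rpow_mul_exp_neg_mul_Ioi hs hx, one_div, inv_rpow hx.le, rpow_neg hx.le, mul_comm]

theorem integrableOn_one_sub_exp_mul_exp_div {b m : ℝ} (hb : 0 < b) (hm : 0 ≤ m) :
    IntegrableOn (fun x ↦ (1 - exp (-m * x)) * exp (-b * x) / x) (Ioi 0) := by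
  refine Integrable.mono' ((exp_neg_integrableOn_Ioi 0 hb).const_mul m)
    (Measurable.aestronglyMeasurable (by fun_prop))
    ((ae_restrict_iff' measurableSet_Ioi).2 (ae_of_all _ fun x (hx : 0 < x) ↦ ?_))
  rw [norm_of_nonneg (by have := one_sub_exp_neg_mul_nonneg hm hx.le; positivity),
    div_le_iff₀ hx]
  nlinarith [mul_le_mul_of_nonneg_right (one_sub_exp_neg_mul_le (m := m) (x := x))
    (exp_pos (-b * x)).le]

theorem integral_one_sub_exp_mul_exp_div {b m : ℝ} (hb : 0 < b) (hm : 0 ≤ m) :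
    ∫ x in Ioi 0, (1 - exp (-m * x)) * exp (-b * x) / x = log (1 + m / b) := by
  have hsplit : ∀ x, (1 - exp (-m * x)) * exp (-b * x) / x
      = x⁻¹ • (exp (-(b * x)) - exp (-((b + m) * x))) := by
    intro x
    rw [smul_eq_mul, sub_mul, one_mul, ← exp_add]
    ring_nf
  have hcont : Continuous fun x : ℝ ↦ exp (-x) := by fun_prop
  have hzero : Tendsto (fun x : ℝ ↦ exp (-x)) (𝓝[>] 0) (𝓝 1) := by
    simpa using (hcont.tendsto 0).mono_left nhdsWithin_le_nhds
  simp_rw [hsplit]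
  rw [Frullani.integral_Ioi_eq (hcont.locallyIntegrable.locallyIntegrableOn _) hb (by linarith)
    hzero tendsto_exp_neg_atTop_nhds_zero, sub_zero, smul_eq_mul, mul_one, add_div, div_self hb.ne']
  simpa only [← hsplit] using integrableOn_one_sub_exp_mul_exp_div hb hm

theorem integrableOn_one_sub_exp_mul_exp_mul_rpow {a m s : ℝ} (ha : 0 ≤ a) (hm : 0 ≤ m)
    (hs0 : 0 < s) (hs1 : s < 1) :
    IntegrableOn (fun x ↦ (1 - exp (-m * x)) * exp (-a * x) * x ^ (-1 - s)) (Ioi 0) := by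
  have hmeas : AEStronglyMeasurable
      (fun x ↦ (1 - exp (-m * x)) * exp (-a * x) * x ^ (-1 - s)) :=
    Measurable.aestronglyMeasurable (by fun_prop)
  have hbound : ∀ x, 0 < x → ‖(1 - exp (-m * x)) * exp (-a * x) * x ^ (-1 - s)‖
      ≤ min (m * x) 1 * x ^ (-1 - s) := by
    intro x hx
    have hexp : exp (-a * x) ≤ 1 := exp_le_one_iff.2 (by nlinarith)
    have hfac : 1 - exp (-m * x) ≤ min (m * x) 1 :=
      le_min one_sub_exp_neg_mul_le (by linarith [exp_pos (-m * x)])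
    rw [norm_of_nonneg (by have := one_sub_exp_neg_mul_nonneg hm hx.le; positivity)]
    gcongr
    calc (1 - exp (-m * x)) * exp (-a * x) ≤ (1 - exp (-m * x)) * 1 := by
          gcongr; exact one_sub_exp_neg_mul_nonneg hm hx.le
      _ ≤ min (m * x) 1 := by rwa [mul_one]
  rw [← Ioc_union_Ioi_eq_Ioi zero_le_one]
  refine IntegrableOn.union ?_ ?_
  · have hpow : IntegrableOn (fun x : ℝ ↦ x ^ (-s)) (Ioc 0 1) := by
      rw [integrableOn_Ioc_iff_integrableOn_Ioo]
      exact (intervalIntegral.integrableOn_Ioo_rpow_iff one_pos).mpr (by linarith)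
    refine Integrable.mono' (hpow.const_mul m) hmeas.restrict
      ((ae_restrict_iff' measurableSet_Ioc).2 (ae_of_all _ fun x hx ↦ ?_))
    refine (hbound x hx.1).trans ?_
    rw [rpow_neg_one_sub hx.1.ne']
    calc min (m * x) 1 * (x ^ (-s) / x) ≤ m * x * (x ^ (-s) / x) := by
          have := hx.1; gcongr; exact min_le_left _ _
      _ = m * x ^ (-s) := by field_simp [hx.1.ne']
  · refine Integrable.mono' (integrableOn_Ioi_rpow_of_lt (a := -1 - s) (by linarith) one_pos)
      hmeas.restrict
      ((ae_restrict_iff' measurableSet_Ioi).2 (ae_of_all _ fun x (hx : 1 < x) ↦ ?_))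
    refine (hbound x (zero_lt_one.trans hx)).trans ?_
    exact mul_le_of_le_one_left (by positivity) (min_le_right _ _)

end Real

theorem gamma_levy_log_identity (Y a μ : ℝ) (hY : 0 < Y) (hY2 : Y < 2)
    (ha : 0 ≤ a) (hμ : 0 < μ) :
    Real.Gamma (Y / 2) *
        ∫ x in Set.Ioi (0 : ℝ),
          (1 - Real.exp (-μ * x)) * Real.exp (-a * x) * x ^ (-1 - Y / 2 : ℝ)
      = ∫ z in Set.Ioi (0 : ℝ), Real.log (1 + μ / (a + z)) * z ^ (Y / 2 - 1 : ℝ) := by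
  have hs0 : 0 < Y / 2 := by positivity
  have hs1 : Y / 2 < 1 := by linarith
  generalize Y / 2 = s at *
  set F : ℝ → ℝ → ℝ := fun x z ↦
    (1 - exp (-μ * x)) * exp (-a * x) / x * (exp (-x * z) * z ^ (s - 1)) with hF
  have hF_z : ∀ x ∈ Ioi (0 : ℝ), ∫ z in Ioi 0, F x z
      = Gamma s * ((1 - exp (-μ * x)) * exp (-a * x) * x ^ (-1 - s)) := by
    intro x (hx : 0 < x)
    rw [integral_const_mul, integral_exp_neg_mul_mul_rpow hx hs0, rpow_neg_one_sub hx.ne']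
    ring
  have hF_x : ∀ z ∈ Ioi (0 : ℝ), ∫ x in Ioi 0, F x z = log (1 + μ / (a + z)) * z ^ (s - 1) := by
    intro z (hz : 0 < z)
    rw [← integral_one_sub_exp_mul_exp_div (by linarith : 0 < a + z) hμ.le, ← integral_mul_const]
    refine setIntegral_congr_fun measurableSet_Ioi fun x _ ↦ ?_
    simp only [hF, neg_add, add_mul, exp_add, neg_mul, mul_comm z x]
    ring
  have hF_nonneg : ∀ᵐ x ∂volume.restrict (Ioi (0 : ℝ)), 0 ≤ᵐ[volume.restrict (Ioi 0)] F x := by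
    refine (ae_restrict_iff' measurableSet_Ioi).2 (ae_of_all _ fun x (hx : 0 < x) ↦ ?_)
    refine (ae_restrict_iff' measurableSet_Ioi).2 (ae_of_all _ fun z (hz : 0 < z) ↦ ?_)
    have := one_sub_exp_neg_mul_nonneg hμ.le hx.le
    positivity
  calc Gamma s * ∫ x in Ioi 0, (1 - exp (-μ * x)) * exp (-a * x) * x ^ (-1 - s)
      = ∫ x in Ioi 0, ∫ z in Ioi 0, F x z := by
        rw [← integral_const_mul]
        exact setIntegral_congr_fun measurableSet_Ioi fun x hx ↦ (hF_z x hx).symm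
    _ = ∫ z in Ioi 0, ∫ x in Ioi 0, F x z := by
        refine integral_integral_swap_of_nonneg (Measurable.aestronglyMeasurable (by fun_prop))
          hF_nonneg ((ae_restrict_iff' measurableSet_Ioi).2 (ae_of_all _ fun x (hx : 0 < x) ↦
            (integrableOn_exp_neg_mul_mul_rpow hx hs0).const_mul _)) ?_
        refine IntegrableOn.congr_fun ?_ (fun x hx ↦ (hF_z x hx).symm) measurableSet_Ioi
        exact (integrableOn_one_sub_exp_mul_exp_mul_rpow ha hμ.le hs0 hs1).const_mul _
    _ = ∫ z in Ioi 0, log (1 + μ / (a + z)) * z ^ (s - 1) :=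
        setIntegral_congr_fun measurableSet_Ioi hF_x
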